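/- Let n ≥ 2 be an integer, k an integer, and x₁, x₂ complex numbers with x₂ ≠ 0. If π(x₁, x₂) lies on the ray B_{2k}, then x₁ = x₂·e^{2πik/n}, and consequently the two sets {e^{2πij/n}·x₁ : 0 ≤ j < n} and {e^{2πij/n}·x₂ : 0 ≤ j < n} coincide (the two regular n-gons fit together, forcing collisions of the corresponding bodies). -/

import Mathlib

open Real

/-- The map `π : ℂ × ℂ → ℝ³`,
`π(x₁,x₂) = (|x₁|² − |x₂|², 2 Re(x₁ x̄₂), 2 Im(x₁ x̄₂))`. -/
noncomputable def piMap (x : ℂ × ℂ) : Fin 3 → ℝ :=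
  ![‖x.1‖ ^ 2 - ‖x.2‖ ^ 2,
    2 * (x.1 * (starRingEnd ℂ) x.2).re,
    2 * (x.1 * (starRingEnd ℂ) x.2).im]

/-- The ray `B_m = {(0, s·cos(mπ/n), s·sin(mπ/n)) : s > 0} ⊂ ℝ³`. -/
noncomputable def Bray (n : ℕ) (m : ℤ) : Set (Fin 3 → ℝ) :=
  {v | ∃ s : ℝ, 0 < s ∧ v = ![0, s * Real.cos (m * π / n), s * Real.sin (m * π / n)]}

/-!
`π(x₁, x₂) ∈ B_{2k}` says that `|x₁| = |x₂|` and that `x₁ x̄₂` is a positive multiple of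
`e^{2πik/n}`. Multiplying by `x₂` gives `x₁ = e^{2πik/n} x₂`, and multiplication by the
`n`-th root of unity `e^{2πik/n}` only permutes the vertices of the regular `n`-gon.
-/

open Complex ComplexConjugate

noncomputable def regularPolygon (n : ℕ) (x : ℂ) : Set ℂ :=
  {z | ∃ j : ℕ, j < n ∧ z = exp (2 * (π : ℂ) * I * (j : ℂ) / (n : ℂ)) * x}

theorem norm_eq_and_mul_conj_of_piMap_mem_Bray {n : ℕ} {m : ℤ} {x y : ℂ}
    (h : piMap (x, y) ∈ Bray n m) :
    ‖x‖ = ‖y‖ ∧ ∃ r : ℝ, 0 < r ∧ x * conj y = r * exp ((m * π / n : ℝ) * I) := by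
  obtain ⟨s, hs, hv⟩ := h
  have h₀ := congrFun hv 0
  have h₁ := congrFun hv 1
  have h₂ := congrFun hv 2
  simp only [piMap, Matrix.cons_val] at h₀ h₁ h₂
  refine ⟨?_, s / 2, half_pos hs, ?_⟩
  · exact (pow_left_inj₀ (norm_nonneg _) (norm_nonneg _) two_ne_zero).mp (sub_eq_zero.mp h₀)
  · apply Complex.ext
    · simp only [re_ofReal_mul, exp_ofReal_mul_I_re]; linarith
    · simp only [im_ofReal_mul, exp_ofReal_mul_I_im]; linarith

theorem eq_mul_of_mul_conj_eq {x y u : ℂ} {r : ℝ} (hxy : ‖x‖ = ‖y‖) (hu : ‖u‖ = 1)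
    (hr : 0 < r) (h : x * conj y = r * u) : x = y * u := by
  have hy : ‖y‖ ^ 2 = r := by
    have := congrArg norm h
    rw [norm_mul, norm_mul, RCLike.norm_conj, hxy, hu, norm_real, Real.norm_of_nonneg hr.le,
      mul_one] at this
    rw [sq, this]
  have : x * (r : ℂ) = y * u * r := by
    calc x * (r : ℂ) = x * conj y * y := by rw [mul_assoc, conj_mul', ← hy, ofReal_pow]
      _ = y * u * r := by rw [h]; ring
  exact mul_right_cancel₀ (ofReal_ne_zero.mpr hr.ne') this

theorem exists_lt_exp_two_pi_I_mul_div_eq {n : ℕ} (hn : n ≠ 0) (j : ℤ) :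
    ∃ i : ℕ, i < n ∧ exp (2 * π * I * i / n) = exp (2 * π * I * j / n) := by
  have hn' : (0 : ℤ) < n := by omega
  have hj₀ := Int.emod_nonneg j hn'.ne'
  refine ⟨(j % n).toNat, by have := Int.emod_lt_of_pos j hn'; omega, ?_⟩
  rw [exp_eq_exp_iff_exists_int]
  refine ⟨-(j / n), ?_⟩
  have hj : ((j % n).toNat : ℂ) = j - n * (j / n : ℤ) := by
    have : ((j % n).toNat : ℤ) = j - n * (j / n) := by
      rw [Int.toNat_of_nonneg hj₀, Int.emod_def]
    exact_mod_cast this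
  rw [hj]
  field_simp
  push_cast
  ring

theorem regularPolygon_mul_exp (n : ℕ) (k : ℤ) (x : ℂ) :
    regularPolygon n (x * exp (2 * π * I * k / n)) = regularPolygon n x := by
  have exp_int_add (a b : ℤ) : exp (2 * π * I * (a + b : ℤ) / n) =
      exp (2 * π * I * a / n) * exp (2 * π * I * b / n) := by
    rw [← Complex.exp_add]; congr 1; push_cast; ring
  ext z
  constructor
  · rintro ⟨j, hj, rfl⟩
    obtain ⟨i, hi, he⟩ := exists_lt_exp_two_pi_I_mul_div_eq (n := n) (by omega) (j + k)
    refine ⟨i, hi, ?_⟩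
    rw [he, exp_int_add]
    push_cast
    ring
  · rintro ⟨j, hj, rfl⟩
    obtain ⟨i, hi, he⟩ := exists_lt_exp_two_pi_I_mul_div_eq (n := n) (by omega) (j - k)
    refine ⟨i, hi, ?_⟩
    rw [he, mul_comm x, ← mul_assoc, ← exp_int_add, sub_add_cancel, Int.cast_natCast]

theorem piMap_mem_Bray_even_general (n : ℕ) (k : ℤ) (x₁ x₂ : ℂ)
    (h : piMap (x₁, x₂) ∈ Bray n (2 * k)) :
    x₁ = x₂ * Complex.exp (2 * (π : ℂ) * Complex.I * (k : ℂ) / (n : ℂ)) ∧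
    {z : ℂ | ∃ j : ℕ, j < n ∧ z = Complex.exp (2 * (π : ℂ) * Complex.I * (j : ℂ) / (n : ℂ)) * x₁}
      = {z : ℂ | ∃ j : ℕ, j < n ∧ z = Complex.exp (2 * (π : ℂ) * Complex.I * (j : ℂ) / (n : ℂ)) * x₂} := by
  obtain ⟨hnorm, r, hr, hprod⟩ := norm_eq_and_mul_conj_of_piMap_mem_Bray h
  have hx₁ : x₁ = x₂ * exp (2 * π * I * k / n) := by
    rw [eq_mul_of_mul_conj_eq hnorm (norm_exp_ofReal_mul_I _) hr hprod]
    congr 2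
    push_cast
    ring
  subst hx₁
  exact ⟨rfl, regularPolygon_mul_exp n k x₂⟩

/-- If `π(x₁,x₂)` lies on the ray `B_{2k}`, then `x₁ = x₂·e^{2πik/n}` and the two
regular `n`-gons `{e^{2πij/n}x₁ : 0 ≤ j < n}` and `{e^{2πij/n}x₂ : 0 ≤ j < n}`
coincide. -/
theorem piMap_mem_Bray_even (n : ℕ) (hn : 2 ≤ n) (k : ℤ) (x₁ x₂ : ℂ) (hx₂ : x₂ ≠ 0)
    (h : piMap (x₁, x₂) ∈ Bray n (2 * k)) :
    x₁ = x₂ * Complex.exp (2 * (π : ℂ) * Complex.I * (k : ℂ) / (n : ℂ)) ∧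
    {z : ℂ | ∃ j : ℕ, j < n ∧ z = Complex.exp (2 * (π : ℂ) * Complex.I * (j : ℂ) / (n : ℂ)) * x₁}
      = {z : ℂ | ∃ j : ℕ, j < n ∧ z = Complex.exp (2 * (π : ℂ) * Complex.I * (j : ℂ) / (n : ℂ)) * x₂} :=
  piMap_mem_Bray_even_general n k x₁ x₂ h
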